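/- (Proposition 8.) Let the eavesdropper have access to exactly one message subset: 𝔄 = {A} for a single A ⊆ Fin m. Consider receivers (K_i, W_i), i = 1,…,n, with W_i \ K_i ≠ ∅. If over some finite field F and some finite key alphabet Y with key pmf p there exists a random index code decodable for all receivers and satisfying the security condition at (A, j) for every j ∉ A, then over some finite field there exists a deterministic index code decodable for all receivers and satisfying the security condition at (A, j) for every j ∉ A. (When |𝔄| = 1, random keys do not help: random secure index codes exist iff deterministic secure index codes exist.) -/

import Mathlib

/-!
Security at `(A, j)` for some wanted `j ∉ A` forces the receiver to know a message outside `A`: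
otherwise the code and `x_A` would determine `x_j`. So a deterministic one-time pad whose key is
a single message `x_{b₀}` with `b₀ ∉ A` works: send `x_t` for `t ∈ A` and `x_t - x_{b₀}` for
`t ∉ A`. Every receiver wanting something outside `A` recovers the key from a known message
outside `A`, and shifting all coordinates outside `A` by the same constant fixes both the code and
`x_A` while moving `x_j` to any prescribed value.
-/

open Matrix

/-- Decodability of a random index code `f` for a receiver with knowledge set `K`
and want set `W`. -/
def Decodable {m ℓ : ℕ} {F Y : Type*} (f : (Fin m → F) → Y → (Fin ℓ → F))
    (K W : Finset (Fin m)) : Prop :=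
  ∃ g : (Fin ℓ → F) → (↥K → F) → (↥W → F),
    ∀ (x : Fin m → F) (y : Y), g (f x y) (fun j => x j.1) = fun j => x j.1

/-- Decodability of a deterministic index code. -/
def DetDecodable {m ℓ : ℕ} {F : Type*} (f : (Fin m → F) → (Fin ℓ → F))
    (K W : Finset (Fin m)) : Prop :=
  ∃ g : (Fin ℓ → F) → (↥K → F) → (↥W → F),
    ∀ x : Fin m → F, g (f x) (fun j => x j.1) = fun j => x j.1

/-- Security condition at `(A, i)` for a random index code with key pmf `p`
(counting form of `H(X_i | f(X,Y), X_A) = H(X_i)`). -/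
def Secure {m ℓ : ℕ} {F Y : Type*} [Fintype Y] (p : Y → NNReal)
    (f : (Fin m → F) → Y → (Fin ℓ → F)) (A : Finset (Fin m)) (i : Fin m) : Prop :=
  ∀ (c : Fin ℓ → F) (z : ↥A → F) (a b : F),
    (∑ y : Y, p y *
      (Nat.card {x : Fin m → F // f x y = c ∧ (∀ j : ↥A, x j.1 = z j) ∧ x i = a} : NNReal)) =
    (∑ y : Y, p y *
      (Nat.card {x : Fin m → F // f x y = c ∧ (∀ j : ↥A, x j.1 = z j) ∧ x i = b} : NNReal))

/-- Security condition at `(A, i)` for a deterministic index code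
(counting form of `H(X_i | f(X), X_A) = H(X_i)`). -/
def DetSecure {m ℓ : ℕ} {F : Type*} (f : (Fin m → F) → (Fin ℓ → F))
    (A : Finset (Fin m)) (i : Fin m) : Prop :=
  ∀ (c : Fin ℓ → F) (z : ↥A → F) (a b : F),
    Nat.card {x : Fin m → F // f x = c ∧ (∀ j : ↥A, x j.1 = z j) ∧ x i = a} =
    Nat.card {x : Fin m → F // f x = c ∧ (∀ j : ↥A, x j.1 = z j) ∧ x i = b}

section Decodable

variable {m ℓ : ℕ} {F Y : Type*} {f : (Fin m → F) → Y → (Fin ℓ → F)}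

theorem Decodable.apply_eq_of_eq {K W : Finset (Fin m)} (h : Decodable f K W)
    {x x' : Fin m → F} {y y' : Y} (hf : f x y = f x' y') (hK : ∀ k ∈ K, x k = x' k)
    {j : Fin m} (hj : j ∈ W) : x j = x' j := by
  obtain ⟨g, hg⟩ := h
  have hxK : (fun k : ↥K => x k.1) = fun k => x' k.1 := funext fun k => hK k.1 k.2
  calc x j = g (f x y) (fun k => x k.1) ⟨j, hj⟩ := (congrFun (hg x y) ⟨j, hj⟩).symm
    _ = g (f x' y') (fun k => x' k.1) ⟨j, hj⟩ := by rw [hf, hxK]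
    _ = x' j := congrFun (hg x' y') ⟨j, hj⟩

theorem Secure.exists_apply_eq [Finite F] [Fintype Y] {p : Y → NNReal} {A : Finset (Fin m)}
    {i : Fin m} (h : Secure p f A i) {y₀ : Y} (hy₀ : p y₀ ≠ 0) (x₀ : Fin m → F) (b : F) :
    ∃ (y : Y) (x : Fin m → F), f x y = f x₀ y₀ ∧ (∀ j : ↥A, x j.1 = x₀ j.1) ∧ x i = b := by
  have hpos := h (f x₀ y₀) (fun j => x₀ j.1) (x₀ i) b
  have hx₀ : (∑ y : Y, p y * (Nat.card {x : Fin m → F // f x y = f x₀ y₀ ∧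
      (∀ j : ↥A, x j.1 = x₀ j.1) ∧ x i = x₀ i} : NNReal)) ≠ 0 := fun h0 =>
    have : Nonempty {x : Fin m → F // f x y₀ = f x₀ y₀ ∧ (∀ j : ↥A, x j.1 = x₀ j.1) ∧
        x i = x₀ i} := ⟨⟨x₀, rfl, fun _ => rfl, rfl⟩⟩
    mul_ne_zero hy₀ (Nat.cast_ne_zero.mpr Nat.card_pos.ne')
      (Finset.sum_eq_zero_iff.mp h0 y₀ (Finset.mem_univ _))
  rw [hpos] at hx₀
  obtain ⟨y, -, hy⟩ := Finset.exists_ne_zero_of_sum_ne_zero hx₀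
  obtain ⟨⟨⟨x, hx⟩⟩, -⟩ := Nat.card_ne_zero.mp (Nat.cast_ne_zero.mp (right_ne_zero_of_mul hy))
  exact ⟨y, x, hx⟩

theorem Decodable.exists_mem_notMem_of_secure [Finite F] [Nontrivial F] [Fintype Y]
    {p : Y → NNReal} {A K W : Finset (Fin m)} {j : Fin m} (hdec : Decodable f K W)
    (hj : j ∈ W) (hsec : Secure p f A j) {y₀ : Y} (hy₀ : p y₀ ≠ 0) : ∃ k ∈ K, k ∉ A := by
  by_contra! hKA
  obtain ⟨a, b, hab⟩ := exists_pair_ne F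
  obtain ⟨y, x, hf, hxA, hxb⟩ := hsec.exists_apply_eq hy₀ (fun _ => a) b
  exact hab (hxb ▸ hdec.apply_eq_of_eq hf (fun k hk => hxA ⟨k, hKA k hk⟩) hj).symm

end Decodable

section Mask

variable {m : ℕ} {F : Type*} [AddCommGroup F] (A : Finset (Fin m))

def maskCode (b₀ : Fin m) (x : Fin m → F) : Fin m → F :=
  fun t => if t ∈ A then x t else x t - x b₀

variable {A}

theorem detDecodable_maskCode_of_subset {b₀ : Fin m} {K W : Finset (Fin m)} (hW : W ⊆ A) :
    DetDecodable (maskCode (F := F) A b₀) K W :=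
  ⟨fun c _ j => c j.1, fun _ => funext fun j => if_pos (hW j.2)⟩

/-- The key is recovered as `x b₀ = x k - c k` from any known coordinate `k ∉ A`. -/
theorem detDecodable_maskCode_of_mem {b₀ k : Fin m} {K W : Finset (Fin m)} (hk : k ∈ K)
    (hkA : k ∉ A) : DetDecodable (maskCode (F := F) A b₀) K W := by
  refine ⟨fun c xK j => if j.1 ∈ A then c j.1 else c j.1 + (xK ⟨k, hk⟩ - c k), fun x => ?_⟩
  funext j
  by_cases hj : j.1 ∈ A <;> simp [maskCode, hj, hkA]

theorem maskCode_add_of_notMem {b₀ : Fin m} (hb₀ : b₀ ∉ A) (x : Fin m → F) (d : F) :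
    maskCode A b₀ (x + fun t => if t ∈ A then 0 else d) = maskCode A b₀ x := by
  funext t
  by_cases ht : t ∈ A <;> simp [maskCode, ht, hb₀]

theorem detSecure_maskCode {b₀ j : Fin m} (hb₀ : b₀ ∉ A) (hj : j ∉ A) :
    DetSecure (maskCode (F := F) A b₀) A j := by
  intro c z a b
  refine Nat.card_congr ((Equiv.addRight fun t => if t ∈ A then 0 else b - a).subtypeEquiv
    fun x => ?_)
  simp only [Equiv.coe_addRight, maskCode_add_of_notMem hb₀, Pi.add_apply, if_neg hj,
    Finset.coe_mem, if_true, add_zero, ← eq_sub_iff_add_eq, sub_sub_cancel]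

end Mask

theorem deterministic_of_random_secure_single_set_general
    (m n : ℕ) (A : Finset (Fin m)) (K W : Fin n → Finset (Fin m))
    (F : Type) [Field F] [Fintype F] (ℓ : ℕ)
    (Y : Type) [Fintype Y] (p : Y → NNReal) (hp : (∑ y : Y, p y) = 1)
    (f : (Fin m → F) → Y → (Fin ℓ → F))
    (hdec : ∀ i, Decodable f (K i) (W i))
    (hsec : ∀ j ∉ A, Secure p f A j) :
    ∃ (F' : Type) (_ : Field F') (_ : Fintype F') (ℓ' : ℕ)
      (f' : (Fin m → F') → (Fin ℓ' → F')),
      (∀ i, DetDecodable f' (K i) (W i)) ∧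
      (∀ j ∉ A, DetSecure f' A j) := by
  obtain ⟨y₀, -, hy₀⟩ := Finset.exists_ne_zero_of_sum_ne_zero (hp ▸ one_ne_zero)
  by_cases hA : ∃ b₀, b₀ ∉ A
  · obtain ⟨b₀, hb₀⟩ := hA
    refine ⟨F, inferInstance, inferInstance, m, maskCode A b₀, fun i => ?_,
      fun j hj => detSecure_maskCode hb₀ hj⟩
    by_cases hWA : W i ⊆ A
    · exact detDecodable_maskCode_of_subset hWA
    obtain ⟨j, hjW, hjA⟩ := Finset.not_subset.mp hWA
    obtain ⟨k, hkK, hkA⟩ := (hdec i).exists_mem_notMem_of_secure hjW (hsec j hjA) hy₀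
    exact detDecodable_maskCode_of_mem hkK hkA
  · push Not at hA
    exact ⟨F, inferInstance, inferInstance, m, id,
      fun _ => ⟨fun c _ j => c j.1, fun _ => rfl⟩, fun j hj => absurd (hA j) hj⟩

/-- **Proposition 8.** When the eavesdropper can access exactly one message subset
(`𝔄 = {A}`), random keys do not help: if over some finite field, with some finite key
alphabet and key pmf, there is a random index code decodable for all receivers and secure
at `(A, j)` for every `j ∉ A`, then over some finite field there is a deterministic index
code decodable for all receivers and secure at `(A, j)` for every `j ∉ A`. -/
theorem deterministic_of_random_secure_single_set
    (m n : ℕ) (A : Finset (Fin m)) (K W : Fin n → Finset (Fin m))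
    (hWK : ∀ i, (W i \ K i).Nonempty)
    (F : Type) [Field F] [Fintype F] (ℓ : ℕ)
    (Y : Type) [Fintype Y] (p : Y → NNReal) (hp : (∑ y : Y, p y) = 1)
    (f : (Fin m → F) → Y → (Fin ℓ → F))
    (hdec : ∀ i, Decodable f (K i) (W i))
    (hsec : ∀ j ∉ A, Secure p f A j) :
    ∃ (F' : Type) (_ : Field F') (_ : Fintype F') (ℓ' : ℕ)
      (f' : (Fin m → F') → (Fin ℓ' → F')),
      (∀ i, DetDecodable f' (K i) (W i)) ∧
      (∀ j ∉ A, DetSecure f' A j) :=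
  deterministic_of_random_secure_single_set_general m n A K W F ℓ Y p hp f hdec hsec
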